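/- For positive semidefinite operators Ω₁, Ω₂ and M₀ on a finite-dimensional Hilbert space, tr(M₀Ω₁)·tr(M₀Ω₂) ≥ |tr(U√Ω₁ M₀ √Ω₂)|² for every unitary U. Consequently, tr(M₀Ω₁)·tr(M₀Ω₂) ≥ (tr|√Ω₁ M₀ √Ω₂|)². -/

import Mathlib

/-!
Writing `M₀ = B† B`, the number `tr (U √Ω₁ M₀ √Ω₂)` is the Hilbert–Schmidt inner product of
`B √Ω₁ U†` and `B √Ω₂`, whose squared norms are `tr (M₀ Ω₁)` and `tr (M₀ Ω₂)`; Cauchy–Schwarz gives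
the first bound. For the second, the polar decomposition `X = U |X|`, obtained by extending the
isometry `|X| v ↦ X v` from the range of `|X|` to a unitary, gives `tr (U† X) = tr |X|`.
-/

open Matrix ComplexOrder Kronecker BigOperators

namespace Matrix.PosSemidef

/-- The positive semidefinite square root of a positive semidefinite matrix
(the definition removed from Mathlib, restored verbatim). -/
noncomputable def sqrt {n 𝕜 : Type*} [Fintype n] [RCLike 𝕜] [DecidableEq n]
    {A : Matrix n n 𝕜} (hA : A.PosSemidef) : Matrix n n 𝕜 :=
  hA.1.eigenvectorUnitary.1 * diagonal ((↑) ∘ (√·) ∘ hA.1.eigenvalues) *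
  (star hA.1.eigenvectorUnitary : Matrix n n 𝕜)

end Matrix.PosSemidef

/-- Trace norm: tr|X| = tr √(Xᴴ X). -/
noncomputable def traceNorm {n : Type*} [Fintype n] [DecidableEq n] (X : Matrix n n ℂ) : ℝ :=
  ((Matrix.posSemidef_conjTranspose_mul_self X).sqrt).trace.re

open scoped MatrixOrder InnerProductSpace

namespace Matrix.PosSemidef

variable {n 𝕜 : Type*} [Fintype n] [RCLike 𝕜] [DecidableEq n] {A : Matrix n n 𝕜}

theorem sqrt_eq_cfcSqrt (hA : A.PosSemidef) : hA.sqrt = CFC.sqrt A := by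
  rw [CFC.sqrt_eq_real_sqrt A hA.nonneg, cfcₙ_eq_cfc, hA.1.cfc_eq]
  rfl

theorem posSemidef_sqrt (hA : A.PosSemidef) : hA.sqrt.PosSemidef := by
  rw [sqrt_eq_cfcSqrt]
  exact (CFC.sqrt_nonneg A).posSemidef

theorem sqrt_mul_self (hA : A.PosSemidef) : hA.sqrt * hA.sqrt = A := by
  rw [sqrt_eq_cfcSqrt]
  exact CFC.sqrt_mul_sqrt_self A hA.nonneg

theorem trace_sqrt_mul_mul_sqrt (hA : A.PosSemidef) (M : Matrix n n 𝕜) :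
    (hA.sqrt * M * hA.sqrt).trace = (M * A).trace := by
  rw [trace_mul_comm, ← Matrix.mul_assoc, hA.sqrt_mul_self, trace_mul_comm]

end Matrix.PosSemidef

section

variable {m n 𝕜 : Type*} [Fintype m] [Fintype n] [RCLike 𝕜]

theorem Matrix.inner_toLp_uncurry (A B : Matrix m n 𝕜) :
    ⟪WithLp.toLp 2 (Function.uncurry A), WithLp.toLp 2 (Function.uncurry B)⟫_𝕜 =
      (Aᴴ * B).trace := by
  simp only [EuclideanSpace.inner_toLp_toLp, dotProduct, Fintype.sum_prod_type, trace, diag,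
    mul_apply, conjTranspose_apply, Pi.star_apply]
  rw [Finset.sum_comm]
  simp_rw [mul_comm]
  rfl

theorem Matrix.norm_trace_conjTranspose_mul_sq_le (A B : Matrix m n 𝕜) :
    ‖(Aᴴ * B).trace‖ ^ 2 ≤ RCLike.re (Aᴴ * A).trace * RCLike.re (Bᴴ * B).trace := by
  have hnorm (C : Matrix m n 𝕜) :
      ‖WithLp.toLp 2 (Function.uncurry C)‖ ^ 2 = RCLike.re (Cᴴ * C).trace := by
    rw [← inner_toLp_uncurry, ← norm_sq_eq_re_inner]
  rw [← inner_toLp_uncurry, ← hnorm, ← hnorm, ← mul_pow]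
  exact pow_le_pow_left₀ (norm_nonneg _) (norm_inner_le_norm _ _) 2

theorem Matrix.PosSemidef.norm_trace_conjTranspose_mul_mul_sq_le {M : Matrix m m 𝕜}
    (hM : M.PosSemidef) (X Y : Matrix m n 𝕜) :
    ‖(Xᴴ * M * Y).trace‖ ^ 2 ≤
      RCLike.re (Xᴴ * M * X).trace * RCLike.re (Yᴴ * M * Y).trace := by
  classical
  obtain ⟨B, rfl⟩ := CStarAlgebra.nonneg_iff_eq_star_mul_self.mp hM.nonneg
  simpa only [conjTranspose_mul, star_eq_conjTranspose, Matrix.mul_assoc] using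
    norm_trace_conjTranspose_mul_sq_le (B * X) (B * Y)

end

theorem Matrix.trace_unitary_mul_mul_star {n α : Type*} [Fintype n] [DecidableEq n] [CommRing α]
    [StarRing α] {U : Matrix n n α} (hU : U ∈ unitaryGroup n α) (A : Matrix n n α) :
    (U * A * star U).trace = A.trace := by
  rw [trace_mul_comm, ← Matrix.mul_assoc, (mem_unitaryGroup_iff').mp hU, Matrix.one_mul]

theorem Matrix.PosSemidef.norm_trace_unitary_mul_sqrt_mul_mul_sqrt_sq_le
    {n 𝕜 : Type*} [Fintype n] [DecidableEq n] [RCLike 𝕜] {Ω₁ Ω₂ M : Matrix n n 𝕜}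
    (hΩ₁ : Ω₁.PosSemidef) (hΩ₂ : Ω₂.PosSemidef) (hM : M.PosSemidef) {U : Matrix n n 𝕜}
    (hU : U ∈ unitaryGroup n 𝕜) :
    ‖(U * (hΩ₁.sqrt * M * hΩ₂.sqrt)).trace‖ ^ 2 ≤
      RCLike.re (M * Ω₁).trace * RCLike.re (M * Ω₂).trace := by
  have hS₁ : hΩ₁.sqrtᴴ = hΩ₁.sqrt := hΩ₁.posSemidef_sqrt.1
  have hS₂ : hΩ₂.sqrtᴴ = hΩ₂.sqrt := hΩ₂.posSemidef_sqrt.1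
  have hX : (hΩ₁.sqrt * star U)ᴴ = U * hΩ₁.sqrt := by
    rw [conjTranspose_mul, hS₁, star_eq_conjTranspose, conjTranspose_conjTranspose]
  have h := hM.norm_trace_conjTranspose_mul_mul_sq_le (hΩ₁.sqrt * star U) hΩ₂.sqrt
  rw [hX, hS₂] at h
  rw [← hΩ₁.trace_sqrt_mul_mul_sqrt, ← hΩ₂.trace_sqrt_mul_mul_sqrt,
    ← trace_unitary_mul_mul_star hU (hΩ₁.sqrt * M * hΩ₁.sqrt)]
  simpa only [Matrix.mul_assoc] using h

section

variable {𝕜 F E : Type*} [RCLike 𝕜] [AddCommGroup F] [Module 𝕜 F]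
  [NormedAddCommGroup E] [InnerProductSpace 𝕜 E] [FiniteDimensional 𝕜 E]

theorem LinearMap.exists_linearIsometryEquiv_comp_eq (S T : F →ₗ[𝕜] E)
    (h : ∀ x, ‖S x‖ = ‖T x‖) : ∃ W : E ≃ₗᵢ[𝕜] E, ∀ x, W (S x) = T x := by
  have hker : ker S ≤ ker T := fun x hx ↦ by
    rw [mem_ker, ← norm_eq_zero, ← h, norm_eq_zero, ← mem_ker]
    exact hx
  let L : range S →ₗ[𝕜] E := (ker S).liftQ T hker ∘ₗ S.quotKerEquivRange.symm.toLinearMap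
  have hL (x : F) : L (S.rangeRestrict x) = T x := by
    simp [L, LinearMap.rangeRestrict, LinearMap.codRestrict]
  let Liso : range S →ₗᵢ[𝕜] E :=
    { toLinearMap := L
      norm_map' := fun u ↦ by
        obtain ⟨x, rfl⟩ := S.surjective_rangeRestrict u
        rw [hL, ← h]
        rfl }
  refine ⟨Liso.extend.toLinearIsometryEquiv rfl, fun x ↦ ?_⟩
  rw [LinearIsometry.coe_toLinearIsometryEquiv]
  exact (Liso.extend_apply (S.rangeRestrict x)).trans (hL x)

end

section

variable {n 𝕜 : Type*} [Fintype n] [DecidableEq n] [RCLike 𝕜]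

theorem Matrix.norm_toEuclideanCLM_apply_eq_of_star_mul_self_eq {A B : Matrix n n 𝕜}
    (h : star A * A = star B * B) (v : EuclideanSpace 𝕜 n) :
    ‖toEuclideanCLM (n := n) (𝕜 := 𝕜) A v‖ = ‖toEuclideanCLM (n := n) (𝕜 := 𝕜) B v‖ := by
  simp only [ContinuousLinearMap.apply_norm_eq_sqrt_inner_adjoint_left,
    ← ContinuousLinearMap.star_eq_adjoint, ← ContinuousLinearMap.mul_def, ← map_star, ← map_mul, h]

theorem Matrix.exists_mem_unitaryGroup_mul_sqrt_eq (X : Matrix n n 𝕜) :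
    ∃ U ∈ unitaryGroup n 𝕜, U * (posSemidef_conjTranspose_mul_self X).sqrt = X := by
  set P := (posSemidef_conjTranspose_mul_self X).sqrt
  have hP : star P * P = star X * X := by
    rw [star_eq_conjTranspose, (posSemidef_conjTranspose_mul_self X).posSemidef_sqrt.1,
      PosSemidef.sqrt_mul_self, star_eq_conjTranspose]
  obtain ⟨W, hW⟩ : ∃ W : EuclideanSpace 𝕜 n ≃ₗᵢ[𝕜] EuclideanSpace 𝕜 n,
      ∀ v, W (toEuclideanCLM (n := n) (𝕜 := 𝕜) P v) = toEuclideanCLM (n := n) (𝕜 := 𝕜) X v :=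
    LinearMap.exists_linearIsometryEquiv_comp_eq _ _
      (norm_toEuclideanCLM_apply_eq_of_star_mul_self_eq hP)
  refine ⟨(toEuclideanCLM (n := n) (𝕜 := 𝕜)).symm (W : EuclideanSpace 𝕜 n →L[𝕜] _), ?_, ?_⟩
  · exact Unitary.map_mem _ (Unitary.linearIsometryEquiv.symm W).2
  · rw [← (toEuclideanCLM (n := n) (𝕜 := 𝕜)).symm_apply_apply P, ← map_mul,
      StarAlgEquiv.symm_apply_eq]
    exact ContinuousLinearMap.ext hW

end

theorem Matrix.exists_mem_unitaryGroup_norm_trace_mul_eq_traceNorm {n : Type*} [Fintype n]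
    [DecidableEq n] (X : Matrix n n ℂ) :
    ∃ U ∈ unitaryGroup n ℂ, ‖(U * X).trace‖ = traceNorm X := by
  obtain ⟨U, hU, hUP⟩ := exists_mem_unitaryGroup_mul_sqrt_eq X
  refine ⟨star U, Unitary.star_mem hU, ?_⟩
  conv_lhs => rw [← hUP, ← Matrix.mul_assoc, Unitary.star_mul_self_of_mem hU, Matrix.one_mul]
  have hP := (posSemidef_conjTranspose_mul_self X).posSemidef_sqrt.trace_nonneg
  simpa only [Complex.ofReal_re, traceNorm] using congrArg Complex.re (Complex.norm_of_nonneg' hP)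

theorem stmt5 {d : ℕ} (Ω₁ Ω₂ M₀ : Matrix (Fin d) (Fin d) ℂ)
    (hΩ₁ : Ω₁.PosSemidef) (hΩ₂ : Ω₂.PosSemidef) (hM₀ : M₀.PosSemidef) :
    (∀ U ∈ Matrix.unitaryGroup (Fin d) ℂ,
        ((M₀ * Ω₁).trace).re * ((M₀ * Ω₂).trace).re ≥
          ‖(U * (hΩ₁.sqrt * M₀ * hΩ₂.sqrt)).trace‖ ^ 2) ∧
      ((M₀ * Ω₁).trace).re * ((M₀ * Ω₂).trace).re ≥
        traceNorm (hΩ₁.sqrt * M₀ * hΩ₂.sqrt) ^ 2 := by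
  have hbound (U) (hU : U ∈ unitaryGroup (Fin d) ℂ) :=
    hΩ₁.norm_trace_unitary_mul_sqrt_mul_mul_sqrt_sq_le hΩ₂ hM₀ hU
  obtain ⟨U, hU, hUX⟩ :=
    exists_mem_unitaryGroup_norm_trace_mul_eq_traceNorm (hΩ₁.sqrt * M₀ * hΩ₂.sqrt)
  exact ⟨hbound, hUX ▸ hbound U hU⟩
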